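/- (Lower bound part of the induced-regularizer computation) For any factorization W_L⋯W_1 = M with W_i ∈ ℝ^{d_i×d_{i−1}}, the quantity R(W) = d_0‖W_L⋯W_2‖_F² + Σ_{j=2}^{L−1}‖W_L⋯W_{j+1}‖_F²‖W_{j−1}⋯W_1‖_F² + d_L‖W_{L−1}⋯W_1‖_F² satisfies R(W) ≥ L(d_0 d_L)^{1/L}‖M‖_*^{2(L−1)/L}. -/

import Mathlib

open Matrix Finset

noncomputable def frobNorm {m n : Type*} [Fintype m] [Fintype n] (M : Matrix m n ℝ) : ℝ :=
  Real.sqrt (∑ i, ∑ j, (M i j) ^ 2)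

noncomputable def nuclearNorm {m n : Type*} [Fintype m] [Fintype n] [DecidableEq n]
    (M : Matrix m n ℝ) : ℝ :=
  ∑ i, Real.sqrt ((show (Mᵀ * M).IsHermitian by
    simpa [Matrix.conjTranspose_eq_transpose_of_trivial] using
      Matrix.isHermitian_conjTranspose_mul_self M).eigenvalues i)

/-
For every split point `j`, `P j * Q j = M`, and `‖A B‖_* ≤ ‖A‖_F ‖B‖_F`. Since
`d₀ = ‖Q 0‖_F²` and `d_L = ‖P L‖_F²`, the regularizer is the sum of the `L` numbers
`‖P (j+1)‖_F² ‖Q j‖_F²`, `j < L`, whose product is at least `d₀ d_L ‖M‖_*^(2(L-1))`; AM-GM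
concludes.

For `C = A B`, diagonalize `Cᵀ C = V Σ² Vᵀ` and put `U = C V Σ⁻¹`. Then
`‖C‖_* = tr (Uᵀ A B V) ≤ ‖Uᵀ A‖_F ‖B V‖_F` by Cauchy-Schwarz, `V` is orthogonal and `U Uᵀ` is
an orthogonal projection, so neither factor exceeds the corresponding Frobenius norm.
-/

lemma isHermitian_transpose_mul_self {m n : Type*} [Fintype m] (C : Matrix m n ℝ) :
    (Cᵀ * C).IsHermitian := by
  simpa [conjTranspose_eq_transpose_of_trivial] using isHermitian_conjTranspose_mul_self C

section MatrixNorms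

variable {m n k : Type*} [Fintype m] [Fintype n] [Fintype k]

lemma trace_transpose_mul_self (X : Matrix m n ℝ) : (Xᵀ * X).trace = ∑ i, ∑ j, X i j ^ 2 := by
  simp only [trace, diag_apply, mul_apply, transpose_apply, sq]
  exact sum_comm

lemma frobNorm_eq_sqrt_trace (X : Matrix m n ℝ) : frobNorm X = √(Xᵀ * X).trace := by
  rw [frobNorm, trace_transpose_mul_self]

lemma frobNorm_nonneg (X : Matrix m n ℝ) : 0 ≤ frobNorm X := Real.sqrt_nonneg _

lemma frobNorm_sq (X : Matrix m n ℝ) : frobNorm X ^ 2 = (Xᵀ * X).trace := by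
  rw [frobNorm_eq_sqrt_trace, Real.sq_sqrt (by rw [trace_transpose_mul_self]; positivity)]

lemma frobNorm_one_sq [DecidableEq n] : frobNorm (1 : Matrix n n ℝ) ^ 2 = Fintype.card n := by
  simp [frobNorm_sq]

lemma frobNorm_transpose (X : Matrix m n ℝ) : frobNorm Xᵀ = frobNorm X := by
  simp only [frobNorm, transpose_apply]
  rw [sum_comm]

lemma trace_mul_le_frobNorm_mul (X : Matrix m n ℝ) (Y : Matrix n m ℝ) :
    (X * Y).trace ≤ frobNorm X * frobNorm Y :=
  calc (X * Y).trace = ∑ i, ∑ j, X i j * Yᵀ i j := by simp [trace, mul_apply]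
    _ ≤ ∑ i, √(∑ j, X i j ^ 2) * √(∑ j, Yᵀ i j ^ 2) :=
      sum_le_sum fun i _ => Real.sum_mul_le_sqrt_mul_sqrt _ _ _
    _ ≤ frobNorm X * frobNorm Yᵀ :=
      Real.sum_sqrt_mul_sqrt_le _ (fun _ => by positivity) (fun _ => by positivity)
    _ = frobNorm X * frobNorm Y := by rw [frobNorm_transpose]

lemma frobNorm_mul_of_mul_transpose_eq_one [DecidableEq n] {V : Matrix n n ℝ} (hV : V * Vᵀ = 1)
    (X : Matrix m n ℝ) : frobNorm (X * V) = frobNorm X := by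
  rw [frobNorm_eq_sqrt_trace, frobNorm_eq_sqrt_trace, transpose_mul, Matrix.mul_assoc,
    trace_mul_comm, Matrix.mul_assoc, Matrix.mul_assoc, hV, Matrix.mul_one]

lemma frobNorm_transpose_mul_le {U : Matrix m n ℝ} (hU : U * Uᵀ * U = U) (X : Matrix m k ℝ) :
    frobNorm (Uᵀ * X) ≤ frobNorm X := by
  have hpyth : (X - U * Uᵀ * X)ᵀ * (X - U * Uᵀ * X) = Xᵀ * X - (Uᵀ * X)ᵀ * (Uᵀ * X) := by
    have hUU : Xᵀ * (U * Uᵀ) * (U * Uᵀ * X) = Xᵀ * (U * Uᵀ) * X :=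
      calc _ = Xᵀ * (U * Uᵀ * U) * Uᵀ * X := by simp only [Matrix.mul_assoc]
        _ = _ := by rw [hU, Matrix.mul_assoc Xᵀ U Uᵀ]
    rw [transpose_sub, transpose_mul, transpose_mul, transpose_transpose, Matrix.sub_mul,
      Matrix.mul_sub, Matrix.mul_sub, hUU, transpose_mul]
    simp only [Matrix.mul_assoc]
    abel
  rw [frobNorm_eq_sqrt_trace, frobNorm_eq_sqrt_trace]
  gcongr
  have h0 : 0 ≤ ((X - U * Uᵀ * X)ᵀ * (X - U * Uᵀ * X)).trace := by
    rw [trace_transpose_mul_self]; positivity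
  rw [hpyth, trace_sub] at h0
  linarith

lemma Matrix.IsHermitian.exists_orthogonal_conj_eq_diagonal [DecidableEq n] {A : Matrix n n ℝ}
    (hA : A.IsHermitian) :
    ∃ V : Matrix n n ℝ, V * Vᵀ = 1 ∧ Vᵀ * A * V = diagonal hA.eigenvalues := by
  refine ⟨hA.eigenvectorUnitary, ?_, ?_⟩
  · simpa [star_eq_conjTranspose, conjTranspose_eq_transpose_of_trivial] using
      mem_unitaryGroup_iff.mp hA.eigenvectorUnitary.2
  · have h := hA.conjStarAlgAut_star_eigenvectorUnitary
    rw [Unitary.conjStarAlgAut_apply] at h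
    simpa [star_eq_conjTranspose, conjTranspose_eq_transpose_of_trivial,
      RCLike.ofReal_real_eq_id] using h

lemma exists_trace_eq_nuclearNorm [DecidableEq n] (C : Matrix m n ℝ) :
    ∃ (U : Matrix m n ℝ) (V : Matrix n n ℝ),
      V * Vᵀ = 1 ∧ U * Uᵀ * U = U ∧ (Uᵀ * C * V).trace = nuclearNorm C := by
  have hH := isHermitian_transpose_mul_self C
  obtain ⟨V, hV, hdiag⟩ := hH.exists_orthogonal_conj_eq_diagonal
  set s : n → ℝ := fun i => √(hH.eigenvalues i)
  -- Since `0⁻¹ = 0`, `U = C V Σ⁻¹` is a partial isometry even when `C` has zero singular values.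
  set U := C * V * diagonal s⁻¹
  have hUCV : Uᵀ * C * V = diagonal s := by
    calc Uᵀ * C * V = diagonal s⁻¹ * (Vᵀ * (Cᵀ * C) * V) := by
          simp only [U, transpose_mul, diagonal_transpose, Matrix.mul_assoc]
      _ = diagonal s := by
          rw [hdiag, diagonal_mul_diagonal]
          congr 1
          ext i
          exact (inv_mul_eq_div _ _).trans Real.div_sqrt
  refine ⟨U, V, hV, ?_, ?_⟩
  · calc U * Uᵀ * U = C * V * (diagonal s⁻¹ * (Uᵀ * C * V) * diagonal s⁻¹) := by
          simp only [U, Matrix.mul_assoc]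
      _ = U := by
          rw [hUCV, diagonal_mul_diagonal, diagonal_mul_diagonal]
          congr 2
          ext i
          simpa using mul_inv_mul_cancel (s i)⁻¹
  · rw [hUCV, trace_diagonal]
    rfl

lemma nuclearNorm_nonneg [DecidableEq n] (C : Matrix m n ℝ) : 0 ≤ nuclearNorm C :=
  sum_nonneg fun _ _ => Real.sqrt_nonneg _

lemma nuclearNorm_mul_le [DecidableEq n] (A : Matrix m k ℝ) (B : Matrix k n ℝ) :
    nuclearNorm (A * B) ≤ frobNorm A * frobNorm B := by
  obtain ⟨U, V, hV, hU, htrace⟩ := exists_trace_eq_nuclearNorm (A * B)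
  calc nuclearNorm (A * B) = ((Uᵀ * A) * (B * V)).trace := by
        rw [← htrace]; simp only [Matrix.mul_assoc]
    _ ≤ frobNorm (Uᵀ * A) * frobNorm (B * V) := trace_mul_le_frobNorm_mul _ _
    _ ≤ frobNorm A * frobNorm B := by
        rw [frobNorm_mul_of_mul_transpose_eq_one hV]
        gcongr
        · exact frobNorm_nonneg B
        · exact frobNorm_transpose_mul_le hU A

end MatrixNorms

lemma sum_range_eq_add_sum_Icc_add {M : Type*} [AddCommMonoid M] (f : ℕ → M) {L : ℕ}
    (hL : 2 ≤ L) :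
    ∑ j ∈ range L, f j = f 0 + ∑ j ∈ Icc 2 (L - 1), f (j - 1) + f (L - 1) := by
  obtain ⟨n, rfl⟩ : ∃ n, L = n + 2 := ⟨L - 2, by omega⟩
  rw [sum_range_succ, sum_range_succ', show n + 2 - 1 = n + 1 by omega,
    ← Ico_add_one_right_eq_Icc, sum_Ico_eq_sum_range, show n + 1 + 1 - 2 = n by omega,
    add_comm (f 0)]
  congr 2
  refine sum_congr rfl fun k _ => ?_
  rw [show 2 + k - 1 = k + 1 by omega]

lemma prod_range_mul_shift {M : Type*} [CommMonoid M] (f g : ℕ → M) {L : ℕ} (hL : 0 < L) :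
    ∏ j ∈ range L, f (j + 1) * g j = f L * g 0 * ∏ j ∈ range (L - 1), f (j + 1) * g (j + 1) := by
  obtain ⟨n, rfl⟩ : ∃ n, L = n + 1 := ⟨L - 1, by omega⟩
  rw [prod_mul_distrib, prod_mul_distrib, prod_range_succ, prod_range_succ', Nat.add_sub_cancel]
  ac_rfl

lemma card_mul_prod_rpow_le_sum {ι : Type*} {s : Finset ι} (hs : s.Nonempty) {z : ι → ℝ}
    (hz : ∀ i ∈ s, 0 ≤ z i) :
    (#s : ℝ) * (∏ i ∈ s, z i) ^ (1 / (#s : ℝ)) ≤ ∑ i ∈ s, z i := by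
  have hcard : (0 : ℝ) < #s := by exact_mod_cast hs.card_pos
  have h := Real.geom_mean_le_arith_mean s (fun _ => 1) z (fun _ _ => zero_le_one)
    (by simpa using hs.card_pos) hz
  simp only [Real.rpow_one, sum_const, nsmul_eq_mul, mul_one, one_mul] at h
  rw [one_div, ← le_div_iff₀' hcard]
  exact h

lemma partial_products_mul_eq {L : ℕ} {d : ℕ → ℕ}
    (W : ∀ i : ℕ, Matrix (Fin (d (i + 1))) (Fin (d i)) ℝ)
    (P : ∀ j : ℕ, Matrix (Fin (d L)) (Fin (d j)) ℝ)
    (Q : ∀ j : ℕ, Matrix (Fin (d j)) (Fin (d 0)) ℝ)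
    (hPL : P L = 1) (hP : ∀ j, j < L → P j = P (j + 1) * W j)
    (hQ : ∀ j, j < L → Q (j + 1) = W j * Q j) {j : ℕ} (hj : j ≤ L) :
    P j * Q j = Q L := by
  induction hj using Nat.decreasingInduction with
  | self => rw [hPL, Matrix.one_mul]
  | of_succ k hk ih => rw [hP k hk, Matrix.mul_assoc, ← hQ k hk, ih]

lemma regularizer_eq_sum_range {L : ℕ} {d : ℕ → ℕ}
    (P : ∀ j : ℕ, Matrix (Fin (d L)) (Fin (d j)) ℝ)
    (Q : ∀ j : ℕ, Matrix (Fin (d j)) (Fin (d 0)) ℝ)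
    (hL : 2 ≤ L) (hPL : P L = 1) (hQ0 : Q 0 = 1) :
    (d 0 : ℝ) * frobNorm (P 1) ^ 2
        + ∑ j ∈ Icc 2 (L - 1), frobNorm (P j) ^ 2 * frobNorm (Q (j - 1)) ^ 2
        + (d L : ℝ) * frobNorm (Q (L - 1)) ^ 2
      = ∑ j ∈ range L, frobNorm (P (j + 1)) ^ 2 * frobNorm (Q j) ^ 2 := by
  have hmiddle : ∑ j ∈ Icc 2 (L - 1), frobNorm (P (j - 1 + 1)) ^ 2 * frobNorm (Q (j - 1)) ^ 2
      = ∑ j ∈ Icc 2 (L - 1), frobNorm (P j) ^ 2 * frobNorm (Q (j - 1)) ^ 2 :=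
    sum_congr rfl fun j hj => by rw [Nat.sub_add_cancel (by simp at hj; omega)]
  rw [sum_range_eq_add_sum_Icc_add (fun j => frobNorm (P (j + 1)) ^ 2 * frobNorm (Q j) ^ 2) hL,
    hmiddle, Nat.sub_add_cancel (by omega), hPL, hQ0, frobNorm_one_sq, frobNorm_one_sq,
    Fintype.card_fin, Fintype.card_fin]
  ring

lemma mul_pow_le_prod_range {L : ℕ} {d : ℕ → ℕ}
    (P : ∀ j : ℕ, Matrix (Fin (d L)) (Fin (d j)) ℝ)
    (Q : ∀ j : ℕ, Matrix (Fin (d j)) (Fin (d 0)) ℝ)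
    (hL : 0 < L) (hPL : P L = 1) (hQ0 : Q 0 = 1) {c : ℝ} (hc : 0 ≤ c)
    (hPQ : ∀ j, 0 < j → j < L → c ≤ frobNorm (P j) ^ 2 * frobNorm (Q j) ^ 2) :
    (d 0 * d L : ℝ) * c ^ (L - 1)
      ≤ ∏ j ∈ range L, frobNorm (P (j + 1)) ^ 2 * frobNorm (Q j) ^ 2 := by
  have hinner : c ^ (L - 1)
      ≤ ∏ j ∈ range (L - 1), frobNorm (P (j + 1)) ^ 2 * frobNorm (Q (j + 1)) ^ 2 := by
    simpa using prod_le_prod (s := range (L - 1)) (f := fun _ => c) (fun _ _ => hc)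
      (fun j hj => hPQ (j + 1) j.succ_pos (by simp at hj; omega))
  rw [prod_range_mul_shift (fun j => frobNorm (P j) ^ 2) (fun j => frobNorm (Q j) ^ 2) hL,
    hPL, hQ0, frobNorm_one_sq, frobNorm_one_sq, Fintype.card_fin, Fintype.card_fin,
    mul_comm (d L : ℝ)]
  gcongr

/-- Lower bound part: R(W) ≥ L (d_0 d_L)^{1/L} ‖M‖_*^{2(L-1)/L} for every
    factorization W_L ⋯ W_1 = M. -/
theorem R_ge {L : ℕ} (hL : 2 ≤ L) (d : ℕ → ℕ)
    (W : ∀ i : ℕ, Matrix (Fin (d (i + 1))) (Fin (d i)) ℝ)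
    (P : ∀ j : ℕ, Matrix (Fin (d L)) (Fin (d j)) ℝ)
    (Q : ∀ j : ℕ, Matrix (Fin (d j)) (Fin (d 0)) ℝ)
    (hPL : P L = 1) (hP : ∀ j, j < L → P j = P (j + 1) * W j)
    (hQ0 : Q 0 = 1) (hQ : ∀ j, j < L → Q (j + 1) = W j * Q j)
    (M : Matrix (Fin (d L)) (Fin (d 0)) ℝ) (hM : Q L = M) :
    (L : ℝ) * ((d 0 : ℝ) * (d L : ℝ)) ^ ((1 : ℝ) / L)
        * nuclearNorm M ^ ((2 * ((L : ℝ) - 1)) / L)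
      ≤ ((d 0 : ℝ) * frobNorm (P 1) ^ 2
          + ∑ j ∈ Finset.Icc 2 (L - 1), frobNorm (P j) ^ 2 * frobNorm (Q (j - 1)) ^ 2
          + (d L : ℝ) * frobNorm (Q (L - 1)) ^ 2) := by
  have hL0 : 0 < L := by omega
  have hnuc := nuclearNorm_nonneg M
  have hprod := mul_pow_le_prod_range P Q hL0 hPL hQ0 (sq_nonneg (nuclearNorm M)) fun j _ hj => by
    rw [← mul_pow, ← hM, ← partial_products_mul_eq W P Q hPL hP hQ hj.le]
    exact pow_le_pow_left₀ (nuclearNorm_nonneg _) (nuclearNorm_mul_le _ _) 2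
  have hroot : ((d 0 * d L : ℝ) * (nuclearNorm M ^ 2) ^ (L - 1)) ^ ((1 : ℝ) / L)
      = ((d 0 : ℝ) * (d L : ℝ)) ^ ((1 : ℝ) / L) * nuclearNorm M ^ ((2 * ((L : ℝ) - 1)) / L) := by
    rw [Real.mul_rpow (by positivity) (by positivity), ← pow_mul, ← Real.rpow_natCast,
      ← Real.rpow_mul hnuc, Nat.cast_mul, Nat.cast_sub hL0]
    congr 2
    push_cast
    ring
  rw [regularizer_eq_sum_range P Q hL hPL hQ0, mul_assoc, ← hroot]
  calc (L : ℝ) * ((d 0 * d L : ℝ) * (nuclearNorm M ^ 2) ^ (L - 1)) ^ ((1 : ℝ) / L)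
      ≤ L * (∏ j ∈ range L, frobNorm (P (j + 1)) ^ 2 * frobNorm (Q j) ^ 2) ^ ((1 : ℝ) / L) := by
        gcongr
    _ ≤ ∑ j ∈ range L, frobNorm (P (j + 1)) ^ 2 * frobNorm (Q j) ^ 2 := by
        simpa using card_mul_prod_rpow_le_sum (nonempty_range_iff.mpr hL0.ne')
          (fun j _ => by positivity)
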